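/- arXiv:2412.11251 — 5 statements merged into one kernel-verified Lean document; each statement's English description precedes it below -/
import Mathlib

section
/- Let n ≥ 1, let B be a symmetric positive-definite n×n real matrix, and let h̄ : ℝⁿ → ℝ be a C¹ function with G := sup_y |∇h̄(y)| < ∞ such that for every x ∈ ℝⁿ the function y ↦ exp(−|x−y|²_B/2 − h̄(y)) is integrable. Define p(x) := ∫_{ℝⁿ} exp(−|x−y|²_B/2) exp(−h̄(y)) dy and q(x) := −log p(x). Then q is differentiable on ℝⁿ and for every x, |∇q(x)| ≤ G. (Gradient bound of Theorem 3.1 via the heat-kernel representation of the solution of the viscous Hamilton–Jacobi equation.) -/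
open MeasureTheory Real Matrix
open scoped RealInnerProductSpace

noncomputable section

/-- Weighted squared norm `|x|_M² = ⟨M⁻¹ x, x⟩` for a matrix `M`. -/
def wsqNorm {n : ℕ} (M : Matrix (Fin n) (Fin n) ℝ) (x : EuclideanSpace ℝ (Fin n)) : ℝ :=
  ⟪(Matrix.toEuclideanLin M⁻¹) x, x⟫

/-!
With `f = exp (-h̄)` and the Gaussian kernel `k`, `p = k ⋆ f`, and the bound `|∇h̄| ≤ G` reads
`‖Df‖ ≤ G f`. This differential inequality is preserved by convolution with any nonnegative
kernel: differentiate under the integral sign, dominating `f` near `x₀` through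
`f x ≤ exp (G ‖x - x₀‖) f x₀`, which is the inequality itself integrated along segments.
For the positive function `p` it is equivalent to `|∇ log p| ≤ G`.
-/

open Filter Set

theorem norm_gradient_eq_norm_fderiv {F : Type*} [NormedAddCommGroup F] [InnerProductSpace ℝ F]
    [CompleteSpace F] (f : F → ℝ) (x : F) : ‖gradient f x‖ = ‖fderiv ℝ f x‖ := by
  rw [← toDual_gradient]
  exact (LinearIsometryEquiv.norm_map _ _).symm

section LogDerivative

variable {E : Type*} [NormedAddCommGroup E] [NormedSpace ℝ E] {f : E → ℝ} {G : ℝ}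

theorem norm_fderiv_exp_neg_le {h : E → ℝ} {x : E} (hh : DifferentiableAt ℝ h x)
    (hbound : ‖fderiv ℝ h x‖ ≤ G) : ‖fderiv ℝ (fun y => exp (-h y)) x‖ ≤ G * exp (-h x) := by
  have hd : HasFDerivAt (fun y => exp (-h y)) (exp (-h x) • -fderiv ℝ h x) x :=
    hh.hasFDerivAt.neg.exp
  rw [hd.fderiv, norm_smul, norm_neg, norm_of_nonneg (exp_pos _).le, mul_comm]
  gcongr

theorem norm_fderiv_log_le {x : E} (hfx : 0 < f x) (hf : DifferentiableAt ℝ f x)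
    (hbound : ‖fderiv ℝ f x‖ ≤ G * f x) : ‖fderiv ℝ (fun y => log (f y)) x‖ ≤ G := by
  rw [fderiv.log hf hfx.ne', norm_smul, norm_inv, norm_of_nonneg hfx.le, inv_mul_le_iff₀ hfx,
    mul_comm]
  exact hbound

theorem le_exp_mul_norm_sub_mul_of_norm_fderiv_le (hpos : ∀ y, 0 < f y) (hf : Differentiable ℝ f)
    (hbound : ∀ y, ‖fderiv ℝ f y‖ ≤ G * f y) (x x' : E) :
    f x' ≤ exp (G * ‖x' - x‖) * f x := by
  have hlog : ‖log (f x') - log (f x)‖ ≤ G * ‖x' - x‖ :=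
    convex_univ.norm_image_sub_le_of_norm_fderiv_le (fun y _ => (hf y).log (hpos y).ne')
      (fun y _ => norm_fderiv_log_le (hpos y) (hf y) (hbound y)) (mem_univ x) (mem_univ x')
  calc f x' = exp (log (f x') - log (f x)) * f x := by
        rw [exp_sub, exp_log (hpos _), exp_log (hpos _), div_mul_cancel₀ _ (hpos x).ne']
    _ ≤ exp (G * ‖x' - x‖) * f x := by
        gcongr
        · exact (hpos x).le
        · exact (le_abs_self _).trans hlog

end LogDerivative

section Convolution

variable {E : Type*} [NormedAddCommGroup E] [NormedSpace ℝ E] [MeasurableSpace E] {μ : Measure E}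
  {k f : E → ℝ} {G : ℝ}

theorem norm_integral_smul_fderiv_comp_sub_le (hk : 0 ≤ k) (hbound : ∀ y, ‖fderiv ℝ f y‖ ≤ G * f y)
    (hint : ∀ x, Integrable (fun z => k z * f (x - z)) μ) (x : E) :
    ‖∫ z, k z • fderiv ℝ f (x - z) ∂μ‖ ≤ G * ∫ z, k z * f (x - z) ∂μ := by
  rw [← integral_const_mul]
  refine norm_integral_le_of_norm_le ((hint x).const_mul G) (Eventually.of_forall fun z => ?_)
  rw [norm_smul, norm_of_nonneg (hk z), mul_left_comm]
  exact mul_le_mul_of_nonneg_left (hbound _) (hk z)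

variable [FiniteDimensional ℝ E] [BorelSpace E]

theorem hasFDerivAt_integral_mul_comp_sub (hk : 0 ≤ k) (hk_meas : AEStronglyMeasurable k μ)
    (hpos : ∀ y, 0 < f y) (hf : Differentiable ℝ f) (hbound : ∀ y, ‖fderiv ℝ f y‖ ≤ G * f y)
    (hint : ∀ x, Integrable (fun z => k z * f (x - z)) μ) (x₀ : E) :
    HasFDerivAt (fun x => ∫ z, k z * f (x - z) ∂μ) (∫ z, k z • fderiv ℝ f (x₀ - z) ∂μ) x₀ := by
  have hG : 0 ≤ G := nonneg_of_mul_nonneg_left ((norm_nonneg _).trans (hbound 0)) (hpos 0)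
  refine hasFDerivAt_integral_of_dominated_of_fderiv_le (𝕜 := ℝ)
    (F' := fun x z => k z • fderiv ℝ f (x - z))
    (bound := fun z => G * exp G * (k z * f (x₀ - z))) (Metric.ball_mem_nhds x₀ one_pos)
    (Eventually.of_forall fun x => (hint x).aestronglyMeasurable) (hint x₀) ?_ ?_
    ((hint x₀).const_mul _) ?_
  · exact hk_meas.smul
      ((measurable_fderiv ℝ f).comp (measurable_const.sub measurable_id)).aestronglyMeasurable
  · filter_upwards with z x hx
    have hshift : f (x - z) ≤ exp G * f (x₀ - z) := by
      refine (le_exp_mul_norm_sub_mul_of_norm_fderiv_le hpos hf hbound (x₀ - z) (x - z)).trans ?_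
      gcongr
      · exact (hpos _).le
      · rw [sub_sub_sub_cancel_right, ← dist_eq_norm]
        exact mul_le_of_le_one_right hG (Metric.mem_ball.mp hx).le
    calc ‖k z • fderiv ℝ f (x - z)‖ = k z * ‖fderiv ℝ f (x - z)‖ := by
          rw [norm_smul, norm_of_nonneg (hk z)]
      _ ≤ k z * (G * (exp G * f (x₀ - z))) := by
          gcongr
          · exact hk z
          · exact (hbound _).trans (mul_le_mul_of_nonneg_left hshift hG)
      _ = G * exp G * (k z * f (x₀ - z)) := by ring
  · filter_upwards with z x _
    simpa using ((hf (x - z)).hasFDerivAt.comp x ((hasFDerivAt_id x).sub_const z)).const_mul (k z)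

theorem norm_fderiv_integral_mul_comp_sub_le (hk : 0 ≤ k) (hk_meas : AEStronglyMeasurable k μ)
    (hpos : ∀ y, 0 < f y) (hf : Differentiable ℝ f) (hbound : ∀ y, ‖fderiv ℝ f y‖ ≤ G * f y)
    (hint : ∀ x, Integrable (fun z => k z * f (x - z)) μ) (x : E) :
    ‖fderiv ℝ (fun x => ∫ z, k z * f (x - z) ∂μ) x‖ ≤ G * ∫ z, k z * f (x - z) ∂μ := by
  rw [(hasFDerivAt_integral_mul_comp_sub hk hk_meas hpos hf hbound hint x).fderiv]
  exact norm_integral_smul_fderiv_comp_sub_le hk hbound hint x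

end Convolution

theorem continuous_wsqNorm {n : ℕ} (M : Matrix (Fin n) (Fin n) ℝ) : Continuous (wsqNorm M) :=
  (Matrix.toEuclideanLin M⁻¹).continuous_of_finiteDimensional.inner continuous_id

theorem stmt0_general (n : ℕ)
    (B : Matrix (Fin n) (Fin n) ℝ)
    (hbar : EuclideanSpace ℝ (Fin n) → ℝ) (hreg : ContDiff ℝ 1 hbar)
    (G : ℝ) (hG : ∀ y, ‖gradient hbar y‖ ≤ G)
    (hint : ∀ x, Integrable fun y =>
      Real.exp (-(wsqNorm B (x - y)) / 2) * Real.exp (-(hbar y)))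
    (p q : EuclideanSpace ℝ (Fin n) → ℝ)
    (hp : ∀ x, p x = ∫ y, Real.exp (-(wsqNorm B (x - y)) / 2) * Real.exp (-(hbar y)))
    (hq : ∀ x, q x = -Real.log (p x)) :
    Differentiable ℝ q ∧ ∀ x, ‖gradient q x‖ ≤ G := by
  set k := fun z => exp (-(wsqNorm B z) / 2)
  set f := fun y => exp (-hbar y)
  have hk_nonneg : 0 ≤ k := fun z => (exp_pos _).le
  have hk_cont : Continuous k := ((continuous_wsqNorm B).neg.div_const 2).rexp
  have hf_pos : ∀ y, 0 < f y := fun y => exp_pos _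
  have hbar_diff : Differentiable ℝ hbar := hreg.differentiable one_ne_zero
  have hf_diff : Differentiable ℝ f := fun y => (hbar_diff y).neg.exp
  have hf_bound : ∀ y, ‖fderiv ℝ f y‖ ≤ G * f y := fun y =>
    norm_fderiv_exp_neg_le (hbar_diff y) (norm_gradient_eq_norm_fderiv hbar y ▸ hG y)
  have hint_conv : ∀ x, Integrable fun z => k z * f (x - z) := fun x => by
    rw [← integrable_comp_sub_left _ x]
    simpa only [k, f, sub_sub_cancel] using hint x
  obtain rfl : p = fun x => ∫ z, k z * f (x - z) := funext fun x => by
    rw [hp x, ← integral_sub_left_eq_self _ volume x]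
    simp only [k, f, sub_sub_cancel]
  obtain rfl : q = fun x => -log (∫ z, k z * f (x - z)) := funext hq
  have hp_pos : ∀ x, 0 < ∫ z, k z * f (x - z) := fun x =>
    integral_pos_of_integrable_nonneg_nonzero (x := 0)
      (hk_cont.mul (hf_diff.continuous.comp (continuous_const.sub continuous_id))) (hint_conv x)
      (fun z => mul_nonneg (hk_nonneg z) (hf_pos _).le) (mul_pos (exp_pos _) (hf_pos _)).ne'
  have hp_diff : Differentiable ℝ fun x => ∫ z, k z * f (x - z) := fun x =>
    (hasFDerivAt_integral_mul_comp_sub hk_nonneg hk_cont.aestronglyMeasurable hf_pos hf_diff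
      hf_bound hint_conv x).differentiableAt
  refine ⟨fun x => ((hp_diff x).log (hp_pos x).ne').neg, fun x => ?_⟩
  rw [norm_gradient_eq_norm_fderiv, fderiv_fun_neg, norm_neg]
  exact norm_fderiv_log_le (hp_pos x) (hp_diff x) (norm_fderiv_integral_mul_comp_sub_le hk_nonneg
    hk_cont.aestronglyMeasurable hf_pos hf_diff hf_bound hint_conv x)

/-- Gradient bound of Theorem 3.1 via the heat-kernel representation. -/
theorem stmt0 (n : ℕ) (hn : 1 ≤ n)
    (B : Matrix (Fin n) (Fin n) ℝ) (hB : B.PosDef)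
    (hbar : EuclideanSpace ℝ (Fin n) → ℝ) (hreg : ContDiff ℝ 1 hbar)
    (G : ℝ) (hG : ∀ y, ‖gradient hbar y‖ ≤ G)
    (hint : ∀ x, Integrable fun y =>
      Real.exp (-(wsqNorm B (x - y)) / 2) * Real.exp (-(hbar y)))
    (p q : EuclideanSpace ℝ (Fin n) → ℝ)
    (hp : ∀ x, p x = ∫ y, Real.exp (-(wsqNorm B (x - y)) / 2) * Real.exp (-(hbar y)))
    (hq : ∀ x, q x = -Real.log (p x)) :
    Differentiable ℝ q ∧ ∀ x, ‖gradient q x‖ ≤ G :=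
  stmt0_general n B hbar hreg G hG hint p q hp hq
end
end

section
/- Let Q₀ be a probability measure on ℝ^d whose support is contained in the closed ball of radius R centered at the origin, and let σ > 0. Define q_σ(x) := ∫_{ℝ^d} exp(−|x−y|²/(2σ²)) dQ₀(y) and g(x) := log q_σ(x) + |x|²/(2σ²). Then g is differentiable on ℝ^d and for every x, |∇g(x)| ≤ R/σ². (Gradient bound of Theorem 3.8 for the Gaussian smoothing of a bounded-support distribution.) -/
open MeasureTheory Real
open scoped RealInnerProductSpace

noncomputable section

/-! Completing the square, `-‖x - y‖² / (2σ²) = -‖x‖² / (2σ²) - ‖y‖² / (2σ²) + ⟪x / σ², y⟫`,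
gives `g x = log Z + log (L (x / σ²))`, where `L x = ∫ exp ⟪x, y⟫ dν(y)` is the Laplace transform
of the Gaussian tilt `ν` of `Q₀`, still supported in the ball of radius `R`. Differentiating under
the integral, `∇ (log L) x` is the mean of `y` under the probability measure
`exp ⟪x, y⟫ dν(y) / L x`, hence has norm at most `R`; rescaling by `1 / σ²` gives the bound. -/

lemma integrable_exp_neg_sq_norm_div {E : Type*} [NormedAddCommGroup E] [MeasurableSpace E]
    [OpensMeasurableSpace E] {μ : Measure E} [IsFiniteMeasure μ] (σ : ℝ) :
    Integrable (fun y ↦ exp (-‖y‖ ^ 2 / (2 * σ ^ 2))) μ := by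
  refine (integrable_const 1).mono' (by fun_prop) (.of_forall fun y ↦ ?_)
  rw [norm_of_nonneg (exp_pos _).le, exp_le_one_iff]
  exact div_nonpos_of_nonpos_of_nonneg (neg_nonpos.2 (sq_nonneg _)) (by positivity)

section LaplaceTransform

variable {E : Type*} [NormedAddCommGroup E] [InnerProductSpace ℝ E] {R σ : ℝ}

def laplaceTransform [MeasurableSpace E] (μ : Measure E) (x : E) : ℝ :=
  ∫ y, exp ⟪x, y⟫ ∂μ

lemma exp_inner_le_of_norm_le (x : E) {y : E} (hy : ‖y‖ ≤ R) : exp ⟪x, y⟫ ≤ exp (‖x‖ * R) :=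
  exp_le_exp.2 <| (real_inner_le_norm x y).trans <| mul_le_mul_of_nonneg_left hy (norm_nonneg x)

lemma norm_exp_inner_smul_innerSL (x y : E) :
    ‖exp ⟪x, y⟫ • innerSL ℝ y‖ = exp ⟪x, y⟫ * ‖y‖ := by
  rw [norm_smul, innerSL_apply_norm, norm_of_nonneg (exp_pos _).le]

lemma hasFDerivAt_exp_inner (x y : E) :
    HasFDerivAt (fun x ↦ exp ⟪x, y⟫) (exp ⟪x, y⟫ • innerSL ℝ y) x := by
  have hinner (x : E) : ⟪x, y⟫ = innerSL ℝ y x := real_inner_comm y x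
  simp only [hinner]
  exact (innerSL ℝ y).hasFDerivAt.exp

lemma neg_sq_norm_sub_div_eq (hσ : σ ≠ 0) (x y : E) :
    -‖x - y‖ ^ 2 / (2 * σ ^ 2) =
      -‖x‖ ^ 2 / (2 * σ ^ 2) + (-‖y‖ ^ 2 / (2 * σ ^ 2) + ⟪(σ ^ 2)⁻¹ • x, y⟫) := by
  rw [norm_sub_sq_real, real_inner_smul_left]
  field_simp
  ring

variable [MeasurableSpace E] [OpensMeasurableSpace E] {μ : Measure E}

lemma integrable_exp_inner [IsFiniteMeasure μ] (hμ : ∀ᵐ y ∂μ, ‖y‖ ≤ R) (x : E) :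
    Integrable (fun y ↦ exp ⟪x, y⟫) μ := by
  refine (integrable_const (exp (‖x‖ * R))).mono'
    (continuous_exp.comp (continuous_const.inner continuous_id)).aestronglyMeasurable ?_
  filter_upwards [hμ] with y hy
  rw [norm_of_nonneg (exp_pos _).le]
  exact exp_inner_le_of_norm_le x hy

lemma laplaceTransform_pos [IsFiniteMeasure μ] [NeZero μ] (hμ : ∀ᵐ y ∂μ, ‖y‖ ≤ R) (x : E) :
    0 < laplaceTransform μ x :=
  integral_exp_pos (integrable_exp_inner hμ x)

lemma hasFDerivAt_laplaceTransform [SecondCountableTopology E] [IsFiniteMeasure μ]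
    (hμ : ∀ᵐ y ∂μ, ‖y‖ ≤ R) (x₀ : E) :
    HasFDerivAt (laplaceTransform μ) (∫ y, exp ⟪x₀, y⟫ • innerSL ℝ y ∂μ) x₀ := by
  have : SecondCountableTopologyEither E (E →L[ℝ] ℝ) := secondCountableTopologyEither_of_left _ _
  refine hasFDerivAt_integral_of_dominated_of_fderiv_le
    (bound := fun _ ↦ exp ((‖x₀‖ + 1) * R) * R) (Metric.ball_mem_nhds x₀ one_pos)
    (.of_forall fun x ↦ (integrable_exp_inner hμ x).aestronglyMeasurable)
    (integrable_exp_inner hμ x₀)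
    (((continuous_exp.comp (continuous_const.inner continuous_id)).smul
      (innerSL ℝ).continuous).aestronglyMeasurable) ?_ (integrable_const _)
    (.of_forall fun y x _ ↦ hasFDerivAt_exp_inner x y)
  filter_upwards [hμ] with y hy x hx
  have hx : ‖x‖ ≤ ‖x₀‖ + 1 := by
    have := norm_le_norm_add_norm_sub' x x₀
    rw [mem_ball_iff_norm] at hx
    linarith
  have hR : 0 ≤ R := (norm_nonneg y).trans hy
  rw [norm_exp_inner_smul_innerSL]
  calc exp ⟪x, y⟫ * ‖y‖ ≤ exp (‖x‖ * R) * R :=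
        mul_le_mul (exp_inner_le_of_norm_le x hy) hy (norm_nonneg y) (exp_pos _).le
    _ ≤ exp ((‖x₀‖ + 1) * R) * R := by gcongr

lemma norm_integral_exp_inner_smul_innerSL_le [IsFiniteMeasure μ] (hμ : ∀ᵐ y ∂μ, ‖y‖ ≤ R)
    (x : E) : ‖∫ y, exp ⟪x, y⟫ • innerSL ℝ y ∂μ‖ ≤ R * laplaceTransform μ x := by
  rw [laplaceTransform, ← integral_const_mul]
  refine norm_integral_le_of_norm_le ((integrable_exp_inner hμ x).const_mul R) ?_
  filter_upwards [hμ] with y hy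
  rw [norm_exp_inner_smul_innerSL, mul_comm R]
  gcongr

lemma log_integral_gaussian_add_sq_norm_div [IsFiniteMeasure μ] [NeZero μ]
    (hμ : ∀ᵐ y ∂μ, ‖y‖ ≤ R) (hσ : σ ≠ 0) (x : E) :
    log (∫ y, exp (-‖x - y‖ ^ 2 / (2 * σ ^ 2)) ∂μ) + ‖x‖ ^ 2 / (2 * σ ^ 2) =
      log (∫ y, exp (-‖y‖ ^ 2 / (2 * σ ^ 2)) ∂μ) +
        log (laplaceTransform (μ.tilted fun y ↦ -‖y‖ ^ 2 / (2 * σ ^ 2)) ((σ ^ 2)⁻¹ • x)) := by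
  have hf := integrable_exp_neg_sq_norm_div (μ := μ) σ
  have := isProbabilityMeasure_tilted hf
  have hZ := integral_exp_pos hf
  have hL := laplaceTransform_pos
    ((tilted_absolutelyContinuous μ fun y ↦ -‖y‖ ^ 2 / (2 * σ ^ 2)).ae_le hμ) ((σ ^ 2)⁻¹ • x)
  rw [laplaceTransform, integral_exp_tilted] at hL ⊢
  have hI := (div_pos_iff_of_pos_right hZ).1 hL
  simp only [neg_sq_norm_sub_div_eq hσ x, exp_add, Pi.add_apply] at hI ⊢
  rw [integral_const_mul, log_mul (exp_ne_zero _) hI.ne', log_exp, log_div hI.ne' hZ.ne']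
  ring

variable [SecondCountableTopology E] [IsFiniteMeasure μ] [NeZero μ]

lemma hasFDerivAt_log_laplaceTransform (hμ : ∀ᵐ y ∂μ, ‖y‖ ≤ R) (x : E) :
    HasFDerivAt (fun x ↦ log (laplaceTransform μ x))
      ((laplaceTransform μ x)⁻¹ • ∫ y, exp ⟪x, y⟫ • innerSL ℝ y ∂μ) x :=
  (hasFDerivAt_laplaceTransform hμ x).log (laplaceTransform_pos hμ x).ne'

lemma differentiable_log_laplaceTransform (hμ : ∀ᵐ y ∂μ, ‖y‖ ≤ R) :
    Differentiable ℝ fun x ↦ log (laplaceTransform μ x) :=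
  fun x ↦ (hasFDerivAt_log_laplaceTransform hμ x).differentiableAt

lemma norm_fderiv_log_laplaceTransform_le (hμ : ∀ᵐ y ∂μ, ‖y‖ ≤ R) (x : E) :
    ‖fderiv ℝ (fun x ↦ log (laplaceTransform μ x)) x‖ ≤ R := by
  have hpos := laplaceTransform_pos hμ x
  rw [(hasFDerivAt_log_laplaceTransform hμ x).fderiv, norm_smul, norm_inv,
    norm_of_nonneg hpos.le, inv_mul_le_iff₀ hpos, mul_comm]
  exact norm_integral_exp_inner_smul_innerSL_le hμ x

end LaplaceTransform

section Rescaling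

variable {E : Type*} [NormedAddCommGroup E] [InnerProductSpace ℝ E] {φ : E → ℝ}

lemma Differentiable.const_add_comp_smul (hφ : Differentiable ℝ φ) (a c : ℝ) :
    Differentiable ℝ fun x ↦ a + φ (c • x) :=
  (hφ.comp (differentiable_id.const_smul c)).const_add a

lemma norm_gradient_const_add_comp_smul_le [CompleteSpace E] {R : ℝ}
    (hφ : ∀ z, ‖fderiv ℝ φ z‖ ≤ R) (a c : ℝ) (x : E) :
    ‖gradient (fun x ↦ a + φ (c • x)) x‖ ≤ |c| * R := by
  rw [gradient, LinearIsometryEquiv.norm_map, fderiv_const_add, fderiv_comp_smul, norm_smul,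
    norm_eq_abs]
  exact mul_le_mul_of_nonneg_left (hφ _) (abs_nonneg c)

end Rescaling

/-- Gradient bound of Theorem 3.8 for the Gaussian smoothing of a
bounded-support distribution. -/
theorem stmt4 {d : ℕ}
    (Q₀ : Measure (EuclideanSpace ℝ (Fin d))) [IsProbabilityMeasure Q₀]
    (R σ : ℝ) (hσ : 0 < σ)
    (hsupp : Q₀ (Metric.closedBall (0 : EuclideanSpace ℝ (Fin d)) R)ᶜ = 0)
    (qσ g : EuclideanSpace ℝ (Fin d) → ℝ)
    (hq : ∀ x, qσ x = ∫ y, Real.exp (-‖x - y‖ ^ 2 / (2 * σ ^ 2)) ∂Q₀)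
    (hg : ∀ x, g x = Real.log (qσ x) + ‖x‖ ^ 2 / (2 * σ ^ 2)) :
    Differentiable ℝ g ∧ ∀ x, ‖gradient g x‖ ≤ R / σ ^ 2 := by
  have hQ₀ : ∀ᵐ y ∂Q₀, ‖y‖ ≤ R := by
    filter_upwards [mem_ae_iff.mpr hsupp] with y hy
    simpa using hy
  set ν := Q₀.tilted fun y ↦ -‖y‖ ^ 2 / (2 * σ ^ 2)
  have := isProbabilityMeasure_tilted (integrable_exp_neg_sq_norm_div (μ := Q₀) σ)
  have hν : ∀ᵐ y ∂ν, ‖y‖ ≤ R := (tilted_absolutelyContinuous Q₀ _).ae_le hQ₀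
  have hg_eq : g = fun x ↦ log (∫ y, exp (-‖y‖ ^ 2 / (2 * σ ^ 2)) ∂Q₀) +
      (fun x ↦ log (laplaceTransform ν x)) ((σ ^ 2)⁻¹ • x) := by
    funext x
    rw [hg, hq, log_integral_gaussian_add_sq_norm_div hQ₀ hσ.ne']
  refine hg_eq ▸ ⟨(differentiable_log_laplaceTransform hν).const_add_comp_smul _ _, fun x ↦ ?_⟩
  calc _ ≤ |(σ ^ 2)⁻¹| * R :=
        norm_gradient_const_add_comp_smul_le (norm_fderiv_log_laplaceTransform_le hν) _ _ x
    _ = R / σ ^ 2 := by rw [abs_of_pos (by positivity), inv_mul_eq_div]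
end
end

section
/- Let Q₀ be a probability measure on ℝ^d whose support is contained in the closed ball of radius R centered at the origin, and let σ > 0. Define q_σ(x) := ∫_{ℝ^d} exp(−|x−y|²/(2σ²)) dQ₀(y) and g(x) := log q_σ(x) + |x|²/(2σ²). Then g is twice differentiable on ℝ^d and for every x, ‖∇²g(x)‖ ≤ 2R²/σ⁴. (Hessian bound of Theorem 3.8 for the Gaussian smoothing of a bounded-support distribution.) -/
/-!
Expanding `‖x - y‖²` shows that `g` is the log-Laplace transform `x ↦ log ∫ exp ⟪x, z⟫ dν(z)` of
the finite measure `ν` obtained from `Q₀` by the Gaussian weight `exp (-‖y‖² / (2σ²))` followed by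
the rescaling `y ↦ y / σ²`, and `ν` lives in the ball of radius `R / σ²`. Differentiating under
the integral sign, the gradient of a log-Laplace transform at `x` is the mean `m` of the normalized
tilted measure `exp ⟪x, z⟫ dν(z)`, and its Hessian is the covariance `E[z ⊗ z] - m ⊗ m` of that
measure; each of the two terms has norm at most `(R / σ²)²`.
-/

open MeasureTheory Real

noncomputable section

open InnerProductSpace

namespace LogLaplace

variable {E F : Type*} [NormedAddCommGroup E] [InnerProductSpace ℝ E] [NormedAddCommGroup F]
  [NormedSpace ℝ F] {R C : ℝ}

theorem norm_exp_inner_smul_le {x y : E} {r : ℝ} (hx : ‖x‖ ≤ r) (hy : ‖y‖ ≤ R) {v : F}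
    (hv : ‖v‖ ≤ C) : ‖exp ⟪x, y⟫_ℝ • v‖ ≤ exp (r * R) * C := by
  have hinner : ⟪x, y⟫_ℝ ≤ r * R :=
    (real_inner_le_norm x y).trans (mul_le_mul hx hy (norm_nonneg y) ((norm_nonneg x).trans hx))
  rw [norm_smul, norm_of_nonneg (exp_pos _).le]
  exact mul_le_mul (exp_le_exp.2 hinner) hv (norm_nonneg v) (exp_pos _).le

variable [MeasurableSpace E]

def expInnerIntegral (μ : Measure E) (φ : E → F) (x : E) : F :=
  ∫ y, exp ⟪x, y⟫_ℝ • φ y ∂μ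

def logLaplace (μ : Measure E) (x : E) : ℝ :=
  log (expInnerIntegral μ (1 : E → ℝ) x)

def tiltedMean (μ : Measure E) (x : E) : E :=
  (expInnerIntegral μ (1 : E → ℝ) x)⁻¹ • expInnerIntegral μ id x

def tiltedCovariance (μ : Measure E) (x : E) : E →L[ℝ] E :=
  (expInnerIntegral μ (1 : E → ℝ) x)⁻¹ • expInnerIntegral μ (fun y => rankOne ℝ y y) x -
    rankOne ℝ (tiltedMean μ x) (tiltedMean μ x)

variable [BorelSpace E] [SecondCountableTopology E] {μ : Measure E} [IsFiniteMeasure μ]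
  {φ : E → F}

theorem integrable_exp_inner_smul (hμ : ∀ᵐ y ∂μ, ‖y‖ ≤ R) (hφ : Continuous φ)
    (hφC : ∀ᵐ y ∂μ, ‖φ y‖ ≤ C) (x : E) :
    Integrable (fun y => exp ⟪x, y⟫_ℝ • φ y) μ :=
  .of_bound (by fun_prop) _ <| by
    filter_upwards [hμ, hφC] with y hy hφy
    exact norm_exp_inner_smul_le le_rfl hy hφy

theorem integrable_exp_inner (hμ : ∀ᵐ y ∂μ, ‖y‖ ≤ R) (x : E) :
    Integrable (fun y => exp ⟪x, y⟫_ℝ) μ := by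
  simpa using integrable_exp_inner_smul (φ := fun _ => (1 : ℝ)) hμ continuous_const
    (.of_forall fun _ => norm_one.le) x

theorem hasFDerivAt_expInnerIntegral (hμ : ∀ᵐ y ∂μ, ‖y‖ ≤ R) (hφ : Continuous φ)
    (hφC : ∀ᵐ y ∂μ, ‖φ y‖ ≤ C) (x₀ : E) :
    HasFDerivAt (expInnerIntegral μ φ)
      (expInnerIntegral μ (fun y => rankOne ℝ (φ y) y) x₀) x₀ := by
  have hrankOne : Continuous fun y => rankOne ℝ (φ y) y :=
    ((rankOne ℝ).continuous.comp hφ).clm_apply continuous_id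
  refine hasFDerivAt_integral_of_dominated_of_fderiv_le (Metric.ball_mem_nhds x₀ one_pos)
    (.of_forall fun x => (integrable_exp_inner_smul hμ hφ hφC x).aestronglyMeasurable)
    (integrable_exp_inner_smul hμ hφ hφC x₀)
    (F' := fun x y => exp ⟪x, y⟫_ℝ • rankOne ℝ (φ y) y)
    (Continuous.aestronglyMeasurable (by fun_prop))
    (bound := fun _ => exp ((‖x₀‖ + 1) * R) * (C * R)) ?_ (integrable_const _) ?_
  · filter_upwards [hμ, hφC] with y hy hφy x hx
    have hxr : ‖x‖ ≤ ‖x₀‖ + 1 := by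
      have := norm_le_norm_add_norm_sub' x x₀
      rw [Metric.mem_ball, dist_eq_norm] at hx
      linarith
    refine norm_exp_inner_smul_le (v := rankOne ℝ (φ y) y) hxr hy ?_
    rw [norm_rankOne]
    exact mul_le_mul hφy hy (norm_nonneg y) ((norm_nonneg _).trans hφy)
  · refine .of_forall fun y x _ => ?_
    have hinner : HasFDerivAt (fun x => ⟪x, y⟫_ℝ) (innerSL ℝ y) x := by
      refine (innerSL ℝ y).hasFDerivAt.congr_of_eventuallyEq (.of_forall fun x => ?_)
      rw [innerSL_apply_apply, real_inner_comm]
    convert hinner.exp.smul_const (φ y) using 1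
    ext v
    simp [smul_smul, real_inner_comm]

theorem norm_expInnerIntegral_le (hμ : ∀ᵐ y ∂μ, ‖y‖ ≤ R) (hφC : ∀ᵐ y ∂μ, ‖φ y‖ ≤ C) (x : E) :
    ‖expInnerIntegral μ φ x‖ ≤ C * expInnerIntegral μ (1 : E → ℝ) x := by
  refine (norm_integral_le_of_norm_le ((integrable_exp_inner hμ x).const_mul C) ?_).trans_eq ?_
  · filter_upwards [hφC] with y hφy
    rw [norm_smul, norm_of_nonneg (exp_pos _).le, mul_comm]
    exact mul_le_mul_of_nonneg_right hφy (exp_pos _).le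
  · simp [expInnerIntegral, integral_const_mul]

variable [NeZero μ]

theorem expInnerIntegral_one_pos (hμ : ∀ᵐ y ∂μ, ‖y‖ ≤ R) (x : E) :
    0 < expInnerIntegral μ (1 : E → ℝ) x := by
  simpa [expInnerIntegral] using integral_exp_pos (integrable_exp_inner hμ x)

theorem norm_inv_smul_expInnerIntegral_le (hμ : ∀ᵐ y ∂μ, ‖y‖ ≤ R) (hφC : ∀ᵐ y ∂μ, ‖φ y‖ ≤ C)
    (x : E) : ‖(expInnerIntegral μ (1 : E → ℝ) x)⁻¹ • expInnerIntegral μ φ x‖ ≤ C := by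
  have hZ := expInnerIntegral_one_pos hμ x
  rw [norm_smul, norm_inv, norm_of_nonneg hZ.le, inv_mul_le_iff₀ hZ, mul_comm]
  exact norm_expInnerIntegral_le hμ hφC x

theorem norm_tiltedCovariance_le (hμ : ∀ᵐ y ∂μ, ‖y‖ ≤ R) (x : E) :
    ‖tiltedCovariance μ x‖ ≤ 2 * R ^ 2 := by
  have hsecond : ∀ᵐ y ∂μ, ‖rankOne ℝ y y‖ ≤ R ^ 2 := by
    filter_upwards [hμ] with y hy
    rw [norm_rankOne, ← sq]
    exact pow_le_pow_left₀ (norm_nonneg y) hy 2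
  have hmean : ‖tiltedMean μ x‖ ≤ R := norm_inv_smul_expInnerIntegral_le hμ hμ x
  calc ‖tiltedCovariance μ x‖
      ≤ R ^ 2 + ‖tiltedMean μ x‖ * ‖tiltedMean μ x‖ := by
        rw [tiltedCovariance, ← norm_rankOne (𝕜 := ℝ)]
        exact (norm_sub_le _ _).trans
          (add_le_add_left (norm_inv_smul_expInnerIntegral_le hμ hsecond x) _)
    _ ≤ R ^ 2 + R * R := by grw [mul_self_le_mul_self (norm_nonneg _) hmean]
    _ = 2 * R ^ 2 := by ring

variable [CompleteSpace E]

omit [NeZero μ] in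
theorem hasFDerivAt_expInnerIntegral_one (hμ : ∀ᵐ y ∂μ, ‖y‖ ≤ R) (x : E) :
    HasFDerivAt (expInnerIntegral μ (1 : E → ℝ)) (toDual ℝ E (expInnerIntegral μ id x)) x := by
  refine (hasFDerivAt_expInnerIntegral (φ := (1 : E → ℝ)) hμ continuous_const
    (.of_forall fun _ => norm_one.le) x).congr_fderiv ?_
  refine (integral_congr_ae (.of_forall fun y => ?_)).trans
    ((toDual ℝ E).toLinearIsometry.integral_comp_comm (μ := μ) (fun y => exp ⟪x, y⟫_ℝ • y))
  rw [LinearIsometryEquiv.coe_toLinearIsometry, map_smul]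
  ext v
  simp [toDual_apply_apply]

theorem hasGradientAt_logLaplace (hμ : ∀ᵐ y ∂μ, ‖y‖ ≤ R) (x : E) :
    HasGradientAt (logLaplace μ) (tiltedMean μ x) x := by
  rw [hasGradientAt_iff_hasFDerivAt, tiltedMean, map_smul]
  exact (hasFDerivAt_expInnerIntegral_one hμ x).log (expInnerIntegral_one_pos hμ x).ne'

theorem hasFDerivAt_tiltedMean (hμ : ∀ᵐ y ∂μ, ‖y‖ ≤ R) (x : E) :
    HasFDerivAt (tiltedMean μ) (tiltedCovariance μ x) x := by
  have hinv := (hasDerivAt_inv (expInnerIntegral_one_pos hμ x).ne').comp_hasFDerivAt x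
    (hasFDerivAt_expInnerIntegral_one hμ x)
  refine (hinv.smul (hasFDerivAt_expInnerIntegral hμ continuous_id hμ x)).congr_fderiv ?_
  ext v
  simp only [tiltedCovariance, tiltedMean, Function.comp_apply, id_eq, neg_smul, add_apply,
    smul_apply, ContinuousLinearMap.smulRight_apply, neg_apply, toDual_apply_apply, smul_eq_mul,
    map_smul, sub_apply, rankOne_apply]
  module

theorem gradient_logLaplace (hμ : ∀ᵐ y ∂μ, ‖y‖ ≤ R) : gradient (logLaplace μ) = tiltedMean μ :=
  funext fun x => (hasGradientAt_logLaplace hμ x).gradient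

theorem differentiable_logLaplace (hμ : ∀ᵐ y ∂μ, ‖y‖ ≤ R) : Differentiable ℝ (logLaplace μ) :=
  fun x => (hasGradientAt_logLaplace hμ x).hasFDerivAt.differentiableAt

theorem differentiable_gradient_logLaplace (hμ : ∀ᵐ y ∂μ, ‖y‖ ≤ R) :
    Differentiable ℝ (gradient (logLaplace μ)) := by
  rw [gradient_logLaplace hμ]
  exact fun x => (hasFDerivAt_tiltedMean hμ x).differentiableAt

theorem norm_fderiv_gradient_logLaplace_le (hμ : ∀ᵐ y ∂μ, ‖y‖ ≤ R) (x : E) :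
    ‖fderiv ℝ (gradient (logLaplace μ)) x‖ ≤ 2 * R ^ 2 := by
  rw [gradient_logLaplace hμ, (hasFDerivAt_tiltedMean hμ x).fderiv]
  exact norm_tiltedCovariance_le hμ x

end LogLaplace

open LogLaplace

section GaussianTilt

variable {E : Type*} [NormedAddCommGroup E] [InnerProductSpace ℝ E] [MeasurableSpace E]
  [BorelSpace E] {Q : Measure E} {σ : ℝ}

def gaussianTilt (Q : Measure E) (σ : ℝ) : Measure E :=
  (Q.withDensity fun y => ENNReal.ofReal (exp (-‖y‖ ^ 2 / (2 * σ ^ 2)))).map ((σ ^ 2)⁻¹ • ·)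

omit [InnerProductSpace ℝ E] [MeasurableSpace E] [BorelSpace E] in
theorem norm_exp_neg_sq_div_le_one (σ : ℝ) (y : E) : ‖exp (-‖y‖ ^ 2 / (2 * σ ^ 2))‖ ≤ 1 := by
  rw [norm_of_nonneg (exp_pos _).le, exp_le_one_iff, neg_div, neg_nonpos]
  positivity

instance [IsFiniteMeasure Q] : IsFiniteMeasure (gaussianTilt Q σ) := by
  have : IsFiniteMeasure (Q.withDensity fun y => ENNReal.ofReal (exp (-‖y‖ ^ 2 / (2 * σ ^ 2)))) :=
    isFiniteMeasure_withDensity_ofReal (.of_bounded (.of_forall (norm_exp_neg_sq_div_le_one σ)))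
  unfold gaussianTilt
  infer_instance

instance [NeZero Q] : NeZero (gaussianTilt Q σ) := by
  refine ⟨fun h => ?_⟩
  rw [gaussianTilt, Measure.map_eq_zero_iff (by fun_prop), withDensity_eq_zero_iff (by fun_prop)]
    at h
  obtain ⟨y, hy⟩ := h.exists
  exact (ENNReal.ofReal_pos.2 (exp_pos _)).ne' hy

theorem gaussianTilt_ae_norm_le {R : ℝ} (hQ : ∀ᵐ y ∂Q, ‖y‖ ≤ R) :
    ∀ᵐ z ∂gaussianTilt Q σ, ‖z‖ ≤ R / σ ^ 2 := by
  rw [gaussianTilt, ae_map_iff (by fun_prop) (measurableSet_le (by fun_prop) (by fun_prop))]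
  filter_upwards [(withDensity_absolutelyContinuous _ _).ae_le hQ] with y hy
  rw [norm_smul, norm_inv, norm_of_nonneg (sq_nonneg σ), inv_mul_eq_div]
  exact div_le_div_of_nonneg_right hy (sq_nonneg σ)

theorem expInnerIntegral_gaussianTilt (hσ : σ ≠ 0) (x : E) :
    expInnerIntegral (gaussianTilt Q σ) (1 : E → ℝ) x =
      exp (‖x‖ ^ 2 / (2 * σ ^ 2)) * ∫ y, exp (-‖x - y‖ ^ 2 / (2 * σ ^ 2)) ∂Q := by
  rw [expInnerIntegral, gaussianTilt, integral_map (by fun_prop) (by fun_prop),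
    integral_withDensity_eq_integral_toReal_smul (by fun_prop)
      (.of_forall fun _ => ENNReal.ofReal_lt_top), ← integral_const_mul]
  congr 1 with y
  simp only [ENNReal.toReal_ofReal (exp_pos _).le, inner_smul_right, Pi.one_apply, smul_eq_mul,
    mul_one, ← exp_add, norm_sub_sq_real, exp_eq_exp]
  field_simp
  ring

theorem logLaplace_gaussianTilt [CompleteSpace E] [IsFiniteMeasure Q] [NeZero Q] (hσ : σ ≠ 0)
    (x : E) :
    logLaplace (gaussianTilt Q σ) x =
      log (∫ y, exp (-‖x - y‖ ^ 2 / (2 * σ ^ 2)) ∂Q) + ‖x‖ ^ 2 / (2 * σ ^ 2) := by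
  have hpos : 0 < ∫ y, exp (-‖x - y‖ ^ 2 / (2 * σ ^ 2)) ∂Q :=
    integral_exp_pos (.of_bound (Continuous.aestronglyMeasurable (by fun_prop)) 1
      (.of_forall fun y => norm_exp_neg_sq_div_le_one σ (x - y)))
  rw [logLaplace, expInnerIntegral_gaussianTilt hσ, log_mul (exp_pos _).ne' hpos.ne', log_exp,
    add_comm]

end GaussianTilt

/-- Hessian bound of Theorem 3.8 for the Gaussian smoothing of a
bounded-support distribution. -/
theorem stmt5 {d : ℕ}
    (Q₀ : Measure (EuclideanSpace ℝ (Fin d))) [IsProbabilityMeasure Q₀]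
    (R σ : ℝ) (hσ : 0 < σ)
    (hsupp : Q₀ (Metric.closedBall (0 : EuclideanSpace ℝ (Fin d)) R)ᶜ = 0)
    (qσ g : EuclideanSpace ℝ (Fin d) → ℝ)
    (hq : ∀ x, qσ x = ∫ y, Real.exp (-‖x - y‖ ^ 2 / (2 * σ ^ 2)) ∂Q₀)
    (hg : ∀ x, g x = Real.log (qσ x) + ‖x‖ ^ 2 / (2 * σ ^ 2)) :
    Differentiable ℝ g ∧ Differentiable ℝ (gradient g) ∧
      ∀ x, ‖fderiv ℝ (gradient g) x‖ ≤ 2 * R ^ 2 / σ ^ 4 := by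
  have hR : ∀ᵐ y ∂Q₀, ‖y‖ ≤ R :=
    Filter.Eventually.mono (mem_ae_iff.2 hsupp) fun _ => mem_closedBall_zero_iff.1
  have hν := gaussianTilt_ae_norm_le (σ := σ) hR
  obtain rfl : g = logLaplace (gaussianTilt Q₀ σ) :=
    funext fun x => by rw [hg, hq, logLaplace_gaussianTilt hσ.ne']
  refine ⟨differentiable_logLaplace hν, differentiable_gradient_logLaplace hν, fun x => ?_⟩
  calc ‖fderiv ℝ (gradient (logLaplace (gaussianTilt Q₀ σ))) x‖
      ≤ 2 * (R / σ ^ 2) ^ 2 := norm_fderiv_gradient_logLaplace_le hν x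
    _ = 2 * R ^ 2 / σ ^ 4 := by ring
end
end

section
/- Let A and C be commuting symmetric positive-definite d×d real matrices and set Ā_t := A e^{−t} + C(1−e^{−t}) for t ≥ 0. Then for every t ≥ 0, ‖A Ā_t⁻¹‖ ≤ max{1, ‖A C⁻¹‖} and e^t ‖I − C Ā_t⁻¹‖ ≤ max{‖I − C A⁻¹‖, ‖A C⁻¹ − I‖}. (The interpolation-matrix estimates defining the constants K and L₂ used throughout the convergence analysis.) -/
/-!
Since `A` and `C` commute, `M = A⁻¹ C` is symmetric, and its eigenvalues are positive: an
eigenvector `x` with `M x = λ x` satisfies `C x = λ A x`, so `xᵀ C x = λ xᵀ A x`.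
Diagonalising `M = U diag(λ) Uᵀ` gives `C = U diag(λ) Uᵀ A` and `Ā_t = U diag(p) Uᵀ A` with
`p = s + (1 - s) λ`, `s = e^{-t}`. Hence every matrix in the statement has the form
`U diag(f(λ)) Uᵀ`, whose operator norm is `maxᵢ |f(λᵢ)|`: `A Ā_t⁻¹ ↔ 1/p`, `A C⁻¹ ↔ 1/λ`,
`I - C Ā_t⁻¹ ↔ s (1 - λ)/p`, `I - C A⁻¹ ↔ 1 - λ`, `A C⁻¹ - I ↔ 1/λ - 1`. Both estimates then
follow from `p ≥ min 1 λ`, `p` being a convex combination of `1` and `λ`.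
-/

open Matrix

noncomputable section

/-- The operator (`ℓ²`-to-`ℓ²`) norm of a real matrix. -/
def matNorm {d : ℕ} (M : Matrix (Fin d) (Fin d) ℝ) : ℝ :=
  ‖Matrix.toEuclideanCLM (𝕜 := ℝ) M‖

section Scalar

variable {s v : ℝ}

lemma min_le_add_one_sub_mul (hs0 : 0 ≤ s) (hs1 : s ≤ 1) : min 1 v ≤ s + (1 - s) * v := by
  nlinarith [mul_nonneg hs0 (sub_nonneg.2 (min_le_left 1 v)),
    mul_nonneg (sub_nonneg.2 hs1) (sub_nonneg.2 (min_le_right 1 v))]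

lemma add_one_sub_mul_pos (hs0 : 0 ≤ s) (hs1 : s ≤ 1) (hv : 0 < v) : 0 < s + (1 - s) * v :=
  (lt_min one_pos hv).trans_le (min_le_add_one_sub_mul hs0 hs1)

lemma inv_add_one_sub_mul_le_max (hs0 : 0 ≤ s) (hs1 : s ≤ 1) (hv : 0 < v) :
    (s + (1 - s) * v)⁻¹ ≤ max 1 v⁻¹ := by
  have hmin := min_le_add_one_sub_mul (v := v) hs0 hs1
  rcases le_total 1 v with h | h
  · rw [min_eq_left h] at hmin
    exact le_max_of_le_left (inv_le_one_of_one_le₀ hmin)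
  · rw [min_eq_right h] at hmin
    exact le_max_of_le_right (inv_anti₀ hv hmin)

lemma abs_one_sub_mul_inv_add_one_sub_mul_le (hs0 : 0 ≤ s) (hs1 : s ≤ 1) (hv : 0 < v) :
    |1 - v * (s + (1 - s) * v)⁻¹| ≤ s * max |1 - v| |v⁻¹ - 1| := by
  have hp := add_one_sub_mul_pos hs0 hs1 hv
  have hcomb : 1 - v * (s + (1 - s) * v)⁻¹ = s * (1 - v) * (s + (1 - s) * v)⁻¹ := by
    rw [eq_mul_inv_iff_mul_eq₀ hp.ne', sub_mul, one_mul, mul_assoc, inv_mul_cancel₀ hp.ne']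
    ring
  have hinv : |1 - v| * v⁻¹ = |v⁻¹ - 1| := by
    rw [show v⁻¹ - 1 = (1 - v) * v⁻¹ by rw [sub_mul, one_mul, mul_inv_cancel₀ hv.ne'],
      abs_mul, abs_of_pos (inv_pos.2 hv)]
  calc |1 - v * (s + (1 - s) * v)⁻¹| = s * |1 - v| * (s + (1 - s) * v)⁻¹ := by
        rw [hcomb, abs_mul, abs_mul, abs_of_nonneg hs0, abs_of_pos (inv_pos.2 hp)]
    _ ≤ s * |1 - v| * max 1 v⁻¹ := by gcongr; exact inv_add_one_sub_mul_le_max hs0 hs1 hv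
    _ = s * max |1 - v| |v⁻¹ - 1| := by
        rw [mul_assoc, mul_max_of_nonneg _ _ (abs_nonneg _), mul_one, hinv]

end Scalar

section PiNorm

variable {ι : Type*} [Fintype ι] {s : ℝ} {v : ι → ℝ}

lemma norm_inv_smul_one_add_smul_le (hs0 : 0 ≤ s) (hs1 : s ≤ 1) (hv : ∀ i, 0 < v i) :
    ‖(s • 1 + (1 - s) • v)⁻¹‖ ≤ max 1 ‖v⁻¹‖ := by
  refine (pi_norm_le_iff_of_nonneg (by positivity)).2 fun i => ?_
  calc ‖(s • 1 + (1 - s) • v)⁻¹ i‖ = (s + (1 - s) * v i)⁻¹ := by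
        simp [abs_of_pos (add_one_sub_mul_pos hs0 hs1 (hv i))]
    _ ≤ max 1 (v i)⁻¹ := inv_add_one_sub_mul_le_max hs0 hs1 (hv i)
    _ ≤ max 1 ‖v⁻¹‖ := max_le_max le_rfl ((le_abs_self _).trans (norm_le_pi_norm v⁻¹ i))

lemma norm_one_sub_mul_inv_smul_one_add_smul_le (hs0 : 0 ≤ s) (hs1 : s ≤ 1)
    (hv : ∀ i, 0 < v i) :
    ‖1 - v * (s • 1 + (1 - s) • v)⁻¹‖ ≤ s * max ‖1 - v‖ ‖v⁻¹ - 1‖ := by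
  refine (pi_norm_le_iff_of_nonneg (by positivity)).2 fun i => ?_
  calc ‖(1 - v * (s • 1 + (1 - s) • v)⁻¹) i‖ = |1 - v i * (s + (1 - s) * v i)⁻¹| := by
        simp
    _ ≤ s * max |1 - v i| |(v i)⁻¹ - 1| :=
        abs_one_sub_mul_inv_add_one_sub_mul_le hs0 hs1 (hv i)
    _ ≤ s * max ‖1 - v‖ ‖v⁻¹ - 1‖ := by
        gcongr
        · exact norm_le_pi_norm (1 - v) i
        · exact norm_le_pi_norm (v⁻¹ - 1) i

end PiNorm

open scoped Matrix.Norms.L2Operator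

namespace Matrix

section RCLike

variable {n 𝕜 : Type*} [Fintype n] [DecidableEq n] [RCLike 𝕜]

def conjDiagonal (U : unitary (Matrix n n 𝕜)) : (n → 𝕜) →ₐ[𝕜] Matrix n n 𝕜 :=
  (Unitary.conjStarAlgAut 𝕜 _ U).toAlgEquiv.toAlgHom.comp (diagonalAlgHom 𝕜)

lemma conjDiagonal_apply (U : unitary (Matrix n n 𝕜)) (w : n → 𝕜) :
    conjDiagonal U w = U * diagonal w * star (U : Matrix n n 𝕜) := rfl

lemma l2_opNorm_conjDiagonal (U : unitary (Matrix n n 𝕜)) (w : n → 𝕜) :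
    ‖conjDiagonal U w‖ = ‖w‖ := by
  rw [conjDiagonal_apply, ← Unitary.coe_star, CStarRing.norm_mul_coe_unitary,
    CStarRing.norm_coe_unitary_mul, l2_opNorm_diagonal]

lemma conjDiagonal_inv (U : unitary (Matrix n n 𝕜)) {w : n → 𝕜} (hw : ∀ i, w i ≠ 0) :
    (conjDiagonal U w)⁻¹ = conjDiagonal U w⁻¹ := by
  refine inv_eq_left_inv ?_
  rw [← map_mul, show w⁻¹ * w = 1 from funext fun i => inv_mul_cancel₀ (hw i), map_one]

lemma IsHermitian.conjDiagonal_eigenvalues {M : Matrix n n 𝕜} (hM : M.IsHermitian) :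
    conjDiagonal hM.eigenvectorUnitary (RCLike.ofReal ∘ hM.eigenvalues) = M :=
  hM.spectral_theorem.symm

end RCLike

section Real

variable {n : Type*} [Fintype n] {A C M : Matrix n n ℝ}

lemma PosDef.eigenvalue_pos_of_mul_eq (hA : A.PosDef) (hC : C.PosDef) (hAM : A * M = C)
    {μ : ℝ} {x : n → ℝ} (hx : x ≠ 0) (hMx : M *ᵥ x = μ • x) : 0 < μ := by
  have hCx : x ⬝ᵥ C *ᵥ x = μ * (x ⬝ᵥ A *ᵥ x) := by
    rw [← hAM, ← mulVec_mulVec, hMx, mulVec_smul, dotProduct_smul, smul_eq_mul]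
  have hCpos := hC.dotProduct_mulVec_pos hx
  rw [star_trivial, hCx] at hCpos
  exact pos_of_mul_pos_left hCpos (by simpa using (hA.dotProduct_mulVec_pos hx).le)

variable [DecidableEq n]

lemma IsHermitian.eigenvalues_pos_of_mul_eq (hM : M.IsHermitian) (hA : A.PosDef)
    (hC : C.PosDef) (hAM : A * M = C) (i : n) : 0 < hM.eigenvalues i :=
  hA.eigenvalue_pos_of_mul_eq hC hAM (by simpa using hM.eigenvectorBasis.orthonormal.ne_zero i)
    (hM.mulVec_eigenvectorBasis i)

theorem PosDef.exists_conjDiagonal_mul_eq (hA : A.PosDef) (hC : C.PosDef)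
    (hAC : Commute A C) :
    ∃ (U : unitary (Matrix n n ℝ)) (v : n → ℝ), (∀ i, 0 < v i) ∧ C = conjDiagonal U v * A := by
  have hAdet : IsUnit A.det := (isUnit_iff_isUnit_det A).1 hA.isUnit
  have hM : (A⁻¹ * C).IsHermitian :=
    (hA.1.inv.commute_iff hC.1).1 (by simpa using hAC.units_inv_left (u := hA.isUnit.unit))
  refine ⟨hM.eigenvectorUnitary, hM.eigenvalues,
    hM.eigenvalues_pos_of_mul_eq hA hC (mul_nonsing_inv_cancel_left _ _ hAdet), ?_⟩
  rw [show conjDiagonal hM.eigenvectorUnitary hM.eigenvalues = A⁻¹ * C by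
      simpa using hM.conjDiagonal_eigenvalues,
    mul_assoc, ← hAC.eq, nonsing_inv_mul_cancel_left _ _ hAdet]

lemma mul_inv_conjDiagonal_mul (hA : IsUnit A.det) (U : unitary (Matrix n n ℝ)) {w : n → ℝ}
    (hw : ∀ i, w i ≠ 0) : A * (conjDiagonal U w * A)⁻¹ = conjDiagonal U w⁻¹ := by
  rw [mul_inv_rev, mul_nonsing_inv_cancel_left _ _ hA, conjDiagonal_inv U hw]

end Real

end Matrix

lemma matNorm_conjDiagonal {d : ℕ} (U : unitary (Matrix (Fin d) (Fin d) ℝ))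
    (w : Fin d → ℝ) :
    matNorm (conjDiagonal U w) = ‖w‖ :=
  l2_opNorm_conjDiagonal U w

/-- The interpolation-matrix estimates defining the constants `K` and `L₂`. -/
theorem stmt8 {d : ℕ}
    (A C : Matrix (Fin d) (Fin d) ℝ) (hA : A.PosDef) (hC : C.PosDef)
    (hcomm : A * C = C * A) (t : ℝ) (ht : 0 ≤ t) :
    matNorm (A * (Real.exp (-t) • A + (1 - Real.exp (-t)) • C)⁻¹)
        ≤ max 1 (matNorm (A * C⁻¹)) ∧
    Real.exp t * matNorm (1 - C * (Real.exp (-t) • A + (1 - Real.exp (-t)) • C)⁻¹)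
        ≤ max (matNorm (1 - C * A⁻¹)) (matNorm (A * C⁻¹ - 1)) := by
  obtain ⟨U, v, hv, rfl⟩ := hA.exists_conjDiagonal_mul_eq hC hcomm
  have hAdet : IsUnit A.det := (isUnit_iff_isUnit_det A).1 hA.isUnit
  set s := Real.exp (-t)
  have hs0 : 0 ≤ s := (Real.exp_pos _).le
  have hs1 : s ≤ 1 := Real.exp_le_one_iff.2 (neg_nonpos.2 ht)
  have hp : ∀ i, (s • 1 + (1 - s) • v) i ≠ 0 := fun i => by
    simpa using (add_one_sub_mul_pos hs0 hs1 (hv i)).ne'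
  have hĀ : s • A + (1 - s) • (conjDiagonal U v * A) =
      conjDiagonal U (s • 1 + (1 - s) • v) * A := by
    simp only [map_add, map_smul, map_one, add_mul, smul_mul_assoc, one_mul]
  rw [hĀ, mul_assoc, mul_inv_conjDiagonal_mul hAdet U hp,
    mul_inv_conjDiagonal_mul hAdet U fun i => (hv i).ne',
    mul_nonsing_inv_cancel_right _ _ hAdet, ← map_mul, ← map_one (conjDiagonal U), ← map_sub,
    ← map_sub, ← map_sub]
  simp only [matNorm_conjDiagonal]
  refine ⟨norm_inv_smul_one_add_smul_le hs0 hs1 hv, ?_⟩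
  calc Real.exp t * ‖1 - v * (s • 1 + (1 - s) • v)⁻¹‖
      ≤ Real.exp t * (s * max ‖1 - v‖ ‖v⁻¹ - 1‖) := by
        gcongr
        exact norm_one_sub_mul_inv_smul_one_add_smul_le hs0 hs1 hv
    _ = max ‖1 - v‖ ‖v⁻¹ - 1‖ := by
        rw [← mul_assoc, ← Real.exp_add, add_neg_cancel, Real.exp_zero, one_mul]
end
end

section
/- Let C be a symmetric positive-definite d×d real matrix, T > 0, and let p : (0,T) × ℝ^d → ℝ be a smooth strictly positive function solving the Fokker–Planck equation ∂_t p = (1/2)(∇·(x p) + ∇·(C∇p)). Then the score s(t,x) := C ∇_x log p(t,x) satisfies, for all (t,x) ∈ (0,T) × ℝ^d, the evolution identity ∂_t s(t,x) = (1/2) ( s(t,x) + (∇_x s(t,x)) x + 2 (∇_x s(t,x)) s(t,x) + C ∇_x (div_x s(t,x)) ), where ∇_x s denotes the spatial Jacobian matrix of s and div_x s its spatial divergence. (The score-evolution identity established inside the proof of Lemma A.2.) -/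
open MeasureTheory Real Matrix ContDiff

noncomputable section

/-- Divergence of a vector field on `ℝ^d`: `div v (x) = ∑ i ∂_i v_i (x)`. -/
def diverg {d : ℕ} (v : EuclideanSpace ℝ (Fin d) → EuclideanSpace ℝ (Fin d))
    (x : EuclideanSpace ℝ (Fin d)) : ℝ :=
  ∑ i, fderiv ℝ v x (EuclideanSpace.single i 1) i

namespace S9

variable {d : ℕ}

lemma grad_apply (f : EuclideanSpace ℝ (Fin d) → ℝ) (x : EuclideanSpace ℝ (Fin d)) (i : Fin d) :
    gradient f x i = fderiv ℝ f x (EuclideanSpace.single i 1) := by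
  have h : inner ℝ ((InnerProductSpace.toDual ℝ (EuclideanSpace ℝ (Fin d))).symm (fderiv ℝ f x))
      (EuclideanSpace.single i 1) = fderiv ℝ f x (EuclideanSpace.single i 1) :=
    InnerProductSpace.toDual_symm_apply
  rw [gradient, ← h, EuclideanSpace.inner_single_right]
  simp

lemma toEuc_apply (C : Matrix (Fin d) (Fin d) ℝ) (v : EuclideanSpace ℝ (Fin d)) (i : Fin d) :
    Matrix.toEuclideanLin C v i = ∑ j, C i j * v j := by
  rw [Matrix.toEuclideanLin_apply]
  simp [Matrix.mulVec, dotProduct]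

lemma hasDerivAt_slice {Y : Type*} [NormedAddCommGroup Y] [NormedSpace ℝ Y]
    {f : ℝ × EuclideanSpace ℝ (Fin d) → Y} {t : ℝ} {x : EuclideanSpace ℝ (Fin d)}
    (hf : DifferentiableAt ℝ f (t, x)) :
    HasDerivAt (fun τ => f (τ, x)) (fderiv ℝ f (t, x) (1, 0)) t := by
  have h1 : HasDerivAt (fun τ : ℝ => (τ, x)) ((1:ℝ), (0 : EuclideanSpace ℝ (Fin d))) t :=
    (hasDerivAt_id t).prodMk (hasDerivAt_const t x)
  exact hf.hasFDerivAt.comp_hasDerivAt t h1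

lemma hasFDerivAt_slice {Y : Type*} [NormedAddCommGroup Y] [NormedSpace ℝ Y]
    {f : ℝ × EuclideanSpace ℝ (Fin d) → Y} {t : ℝ} {x : EuclideanSpace ℝ (Fin d)}
    (hf : DifferentiableAt ℝ f (t, x)) :
    HasFDerivAt (fun z => f (t, z))
      ((fderiv ℝ f (t, x)).comp ((0 : EuclideanSpace ℝ (Fin d) →L[ℝ] ℝ).prod
        (ContinuousLinearMap.id ℝ (EuclideanSpace ℝ (Fin d))))) x :=
  hf.hasFDerivAt.comp x ((hasFDerivAt_const t x).prodMk (hasFDerivAt_id x))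

lemma fderiv_slice {Y : Type*} [NormedAddCommGroup Y] [NormedSpace ℝ Y]
    {f : ℝ × EuclideanSpace ℝ (Fin d) → Y} {t : ℝ} {x : EuclideanSpace ℝ (Fin d)}
    (hf : DifferentiableAt ℝ f (t, x)) (v : EuclideanSpace ℝ (Fin d)) :
    fderiv ℝ (fun z => f (t, z)) x v = fderiv ℝ f (t, x) (0, v) := by
  rw [(hasFDerivAt_slice hf).fderiv]
  simp

lemma pd_contDiffAt {f : ℝ × EuclideanSpace ℝ (Fin d) → ℝ} {q : ℝ × EuclideanSpace ℝ (Fin d)}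
    (hf : ContDiffAt ℝ ∞ f q) (v : ℝ × EuclideanSpace ℝ (Fin d)) :
    ContDiffAt ℝ ∞ (fun q' => fderiv ℝ f q' v) q := by
  have h1 : ContDiffAt ℝ ∞ (fderiv ℝ f) q := hf.fderiv_right (by simp)
  exact (ContinuousLinearMap.apply ℝ ℝ v).contDiff.contDiffAt.comp q h1

lemma pd_fderiv {f : ℝ × EuclideanSpace ℝ (Fin d) → ℝ} {q : ℝ × EuclideanSpace ℝ (Fin d)}
    (hf : ContDiffAt ℝ ∞ f q) (v w : ℝ × EuclideanSpace ℝ (Fin d)) :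
    fderiv ℝ (fun q' => fderiv ℝ f q' v) q w = fderiv ℝ (fderiv ℝ f) q w v := by
  have hd : DifferentiableAt ℝ (fderiv ℝ f) q :=
    (hf.fderiv_right (m := ∞) (by simp)).differentiableAt (by simp)
  have := ((ContinuousLinearMap.apply ℝ ℝ v).hasFDerivAt.comp q hd.hasFDerivAt).fderiv
  rw [show (fun q' => fderiv ℝ f q' v) = (ContinuousLinearMap.apply ℝ ℝ v) ∘ (fderiv ℝ f) from rfl,
    this]
  rfl

lemma pd_swap {f : ℝ × EuclideanSpace ℝ (Fin d) → ℝ} {q : ℝ × EuclideanSpace ℝ (Fin d)}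
    (hf : ContDiffAt ℝ ∞ f q) (v w : ℝ × EuclideanSpace ℝ (Fin d)) :
    fderiv ℝ (fun q' => fderiv ℝ f q' v) q w = fderiv ℝ (fun q' => fderiv ℝ f q' w) q v := by
  rw [pd_fderiv hf v w, pd_fderiv hf w v]
  exact (hf.isSymmSndFDerivAt (by simp; exact WithTop.coe_le_coe.2 le_top)) w v

lemma vecfield_eq {v : EuclideanSpace ℝ (Fin d) → EuclideanSpace ℝ (Fin d)}
    {g : Fin d → EuclideanSpace ℝ (Fin d) → ℝ} (hv : ∀ z i, v z i = g i z) :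
    v = fun z => (WithLp.equiv 2 (Fin d → ℝ)).symm (fun i => g i z) := by
  funext z
  ext i
  simp [hv]

lemma hasFDerivAt_vec {g : Fin d → EuclideanSpace ℝ (Fin d) → ℝ}
    {g' : Fin d → EuclideanSpace ℝ (Fin d) →L[ℝ] ℝ} {y : EuclideanSpace ℝ (Fin d)}
    (h : ∀ i, HasFDerivAt (g i) (g' i) y) :
    HasFDerivAt (fun z => (WithLp.equiv 2 (Fin d → ℝ)).symm (fun i => g i z))
      ((((PiLp.continuousLinearEquiv 2 ℝ (fun _ : Fin d => ℝ)).symm :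
          ((Fin d) → ℝ) →L[ℝ] EuclideanSpace ℝ (Fin d))).comp
        (ContinuousLinearMap.pi g')) y :=
  ((PiLp.continuousLinearEquiv 2 ℝ (fun _ : Fin d => ℝ)).symm.hasFDerivAt).comp y
    (hasFDerivAt_pi.2 h)

lemma fderiv_vec_apply {v : EuclideanSpace ℝ (Fin d) → EuclideanSpace ℝ (Fin d)}
    {g : Fin d → EuclideanSpace ℝ (Fin d) → ℝ}
    {g' : Fin d → EuclideanSpace ℝ (Fin d) →L[ℝ] ℝ} {y : EuclideanSpace ℝ (Fin d)}
    (hv : ∀ z i, v z i = g i z) (h : ∀ i, HasFDerivAt (g i) (g' i) y)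
    (w : EuclideanSpace ℝ (Fin d)) (i : Fin d) :
    fderiv ℝ v y w i = g' i w := by
  rw [vecfield_eq hv, (hasFDerivAt_vec h).fderiv]
  simp

lemma diverg_eq {v : EuclideanSpace ℝ (Fin d) → EuclideanSpace ℝ (Fin d)}
    {g : Fin d → EuclideanSpace ℝ (Fin d) → ℝ}
    {g' : Fin d → EuclideanSpace ℝ (Fin d) →L[ℝ] ℝ} {y : EuclideanSpace ℝ (Fin d)}
    (hv : ∀ z i, v z i = g i z) (h : ∀ i, HasFDerivAt (g i) (g' i) y) :
    diverg v y = ∑ i, g' i (EuclideanSpace.single i 1) := by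
  rw [diverg]
  exact Finset.sum_congr rfl fun i _ => fderiv_vec_apply hv h _ i

lemma deriv_vec {v : ℝ → EuclideanSpace ℝ (Fin d)} {g : Fin d → ℝ → ℝ} {g' : Fin d → ℝ} {t : ℝ}
    (hv : ∀ᶠ τ in nhds t, ∀ i, v τ i = g i τ) (hg : ∀ i, HasDerivAt (g i) (g' i) t) (i : Fin d) :
    deriv v t i = g' i := by
  have h2 : HasDerivAt (fun τ => ((WithLp.equiv 2 (Fin d → ℝ)).symm (fun i => g i τ) :
      EuclideanSpace ℝ (Fin d))) ((WithLp.equiv 2 (Fin d → ℝ)).symm g') t := by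
    have hpi : HasDerivAt (fun τ (i : Fin d) => g i τ) (fun i => g' i) t :=
      hasDerivAt_pi.2 hg
    exact (PiLp.continuousLinearEquiv 2 ℝ (fun _ : Fin d => ℝ)).symm.hasFDerivAt.comp_hasDerivAt
      t hpi
  have heq : v =ᶠ[nhds t] fun τ => ((WithLp.equiv 2 (Fin d → ℝ)).symm (fun i => g i τ) :
      EuclideanSpace ℝ (Fin d)) := by
    filter_upwards [hv] with τ hτ
    ext i
    simp [hτ]
  rw [Filter.EventuallyEq.deriv_eq heq, h2.deriv]
  simp

lemma decomp_pair (φ : (ℝ × EuclideanSpace ℝ (Fin d)) →L[ℝ] ℝ) (v : EuclideanSpace ℝ (Fin d)) :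
    φ (0, v) = ∑ m, v m * φ (0, EuclideanSpace.single m 1) := by
  have hv : ((0:ℝ), v) = ∑ m, v m • ((0:ℝ), EuclideanSpace.single m 1) := by
    apply Prod.ext
    · rw [Prod.fst_sum]; simp
    · rw [Prod.snd_sum]
      ext i
      have hp : ∀ w : EuclideanSpace ℝ (Fin d), w i = EuclideanSpace.proj (𝕜 := ℝ) i w :=
        fun w => rfl
      rw [hp ((0,v).2), hp (∑ c : Fin d, ((v c • ((0:ℝ), EuclideanSpace.single c 1)).2)),
        _root_.map_sum, Finset.sum_eq_single i]
      · simp [EuclideanSpace.single_apply]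
      · intro b _ hb
        simp [EuclideanSpace.single_apply, Ne.symm hb]
      · simp
  rw [hv, map_sum]
  refine Finset.sum_congr rfl fun m _ => ?_
  rw [_root_.map_smul, smul_eq_mul]

lemma algebra_key (C : Matrix (Fin d) (Fin d) ℝ) (hCs : ∀ a b, C a b = C b a)
    (A : Fin d → ℝ) (x : Fin d → ℝ) (D : Fin d → Fin d → ℝ) (hD : ∀ a b, D a b = D b a)
    (T3 : Fin d → Fin d → Fin d → ℝ) (i : Fin d) :
    ∑ k, C i k * ((1/2) * (A k + ∑ m, x m * D k m
        + ∑ a, ∑ b, C a b * (A a * D k b + A b * D k a + T3 k a b)))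
      = (1/2) * ((∑ k, C i k * A k) + (∑ j, C i j * ∑ m, x m * D m j)
        + 2 * (∑ j, C i j * ∑ m, (∑ b, C m b * A b) * D m j)
        + ∑ k, C i k * ∑ a, ∑ b, C a b * T3 k a b) := by
  have expand : ∀ k, C i k * ((1/2) * (A k + ∑ m, x m * D k m
        + ∑ a, ∑ b, C a b * (A a * D k b + A b * D k a + T3 k a b)))
      = (1/2) * (C i k * A k) + (1/2) * (C i k * ∑ m, x m * D k m)
        + (1/2) * (C i k * ∑ a, ∑ b, C a b * (A a * D k b))
        + (1/2) * (C i k * ∑ a, ∑ b, C a b * (A b * D k a))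
        + (1/2) * (C i k * ∑ a, ∑ b, C a b * T3 k a b) := by
    intro k
    simp only [mul_add, Finset.sum_add_distrib]
    ring
  rw [Finset.sum_congr rfl fun k _ => expand k]
  simp only [Finset.sum_add_distrib, ← Finset.mul_sum]
  have I2 : ∑ k, C i k * ∑ m, x m * D k m = ∑ j, C i j * ∑ m, x m * D m j := by
    refine Finset.sum_congr rfl fun k _ => ?_
    congr 1
    exact Finset.sum_congr rfl fun m _ => by rw [hD]
  have I3 : ∑ k, C i k * ∑ a, ∑ b, C a b * (A b * D k a)
      = ∑ j, C i j * ∑ m, (∑ b, C m b * A b) * D m j := by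
    refine Finset.sum_congr rfl fun k _ => ?_
    congr 1
    refine Finset.sum_congr rfl fun a _ => ?_
    rw [Finset.sum_mul, hD k a]
    exact Finset.sum_congr rfl fun b _ => by ring
  have I4 : ∑ k, C i k * ∑ a, ∑ b, C a b * (A a * D k b)
      = ∑ j, C i j * ∑ m, (∑ b, C m b * A b) * D m j := by
    refine Finset.sum_congr rfl fun k _ => ?_
    congr 1
    rw [Finset.sum_comm]
    refine Finset.sum_congr rfl fun b _ => ?_
    rw [Finset.sum_mul, hD k b]
    exact Finset.sum_congr rfl fun a _ => by rw [hCs a b]; ring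
  rw [I2, I3, I4]
  ring

/-- The joint density as a function on `ℝ × ℝ^d`. -/
def Fq (p : ℝ → EuclideanSpace ℝ (Fin d) → ℝ) : ℝ × EuclideanSpace ℝ (Fin d) → ℝ :=
  fun q => p q.1 q.2

/-- The log-density. -/
def Gq (p : ℝ → EuclideanSpace ℝ (Fin d) → ℝ) : ℝ × EuclideanSpace ℝ (Fin d) → ℝ :=
  fun q => Real.log (Fq p q)

/-- Spatial coordinate directions in `ℝ × ℝ^d`. -/
def ee (i : Fin d) : ℝ × EuclideanSpace ℝ (Fin d) := ((0:ℝ), EuclideanSpace.single i 1)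

/-- Time direction in `ℝ × ℝ^d`. -/
def ett {d : ℕ} : ℝ × EuclideanSpace ℝ (Fin d) := ((1:ℝ), 0)

/-- Spatial partial of the log-density. -/
def Aq (p : ℝ → EuclideanSpace ℝ (Fin d) → ℝ) (l : Fin d) :
    ℝ × EuclideanSpace ℝ (Fin d) → ℝ :=
  fun q => fderiv ℝ (Gq p) q (ee l)

/-- Time partial of the log-density. -/
def Atq (p : ℝ → EuclideanSpace ℝ (Fin d) → ℝ) : ℝ × EuclideanSpace ℝ (Fin d) → ℝ :=
  fun q => fderiv ℝ (Gq p) q ett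

/-- Spatial partial of the density. -/
def AFq (p : ℝ → EuclideanSpace ℝ (Fin d) → ℝ) (l : Fin d) :
    ℝ × EuclideanSpace ℝ (Fin d) → ℝ :=
  fun q => fderiv ℝ (Fq p) q (ee l)

/-- Second spatial partials of the log-density. -/
def pdAq (p : ℝ → EuclideanSpace ℝ (Fin d) → ℝ) (a b : Fin d) :
    ℝ × EuclideanSpace ℝ (Fin d) → ℝ :=
  fun q => fderiv ℝ (Aq p b) q (ee a)

end S9

/-- The score-evolution identity established inside the proof of Lemma A.2. -/
theorem stmt9 {d : ℕ}
    (C : Matrix (Fin d) (Fin d) ℝ) (hC : C.PosDef)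
    (T : ℝ) (hT : 0 < T)
    (p : ℝ → EuclideanSpace ℝ (Fin d) → ℝ)
    (hsmooth : ContDiffOn ℝ (⊤ : ℕ∞) (fun q : ℝ × EuclideanSpace ℝ (Fin d) => p q.1 q.2)
      (Set.Ioo 0 T ×ˢ Set.univ))
    (hpos : ∀ t ∈ Set.Ioo (0 : ℝ) T, ∀ x, 0 < p t x)
    (hFP : ∀ t ∈ Set.Ioo (0 : ℝ) T, ∀ x,
      deriv (fun τ => p τ x) t =
        (1 / 2) * (diverg (fun z => p t z • z) x +
          diverg (fun z => Matrix.toEuclideanLin C (gradient (fun w => p t w) z)) x))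
    (s : ℝ → EuclideanSpace ℝ (Fin d) → EuclideanSpace ℝ (Fin d))
    (hs : ∀ t x, s t x = Matrix.toEuclideanLin C (gradient (fun z => Real.log (p t z)) x)) :
    ∀ t ∈ Set.Ioo (0 : ℝ) T, ∀ x,
      deriv (fun τ => s τ x) t =
        (1 / 2 : ℝ) • (s t x + fderiv ℝ (s t) x x + (2 : ℝ) • fderiv ℝ (s t) x (s t x) +
          Matrix.toEuclideanLin C (gradient (fun z => diverg (s t) z) x)) := by
  classical
  intro t ht x
  set Ω : Set (ℝ × EuclideanSpace ℝ (Fin d)) := Set.Ioo 0 T ×ˢ Set.univ with hΩdef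
  have hΩ : IsOpen Ω := isOpen_Ioo.prod isOpen_univ
  have hq0 : (t, x) ∈ Ω := ⟨ht, trivial⟩
  -- basic smoothness
  have hFsm : ∀ q ∈ Ω, ContDiffAt ℝ ∞ (S9.Fq p) q := fun q hq =>
    (hsmooth.contDiffAt (hΩ.mem_nhds hq)).of_le (by simp)
  have hFpos : ∀ q ∈ Ω, 0 < S9.Fq p q := fun q hq => hpos q.1 hq.1 q.2
  have hGsm : ∀ q ∈ Ω, ContDiffAt ℝ ∞ (S9.Gq p) q := fun q hq =>
    (hFsm q hq).log (hFpos q hq).ne'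
  have hFdiff : ∀ q ∈ Ω, DifferentiableAt ℝ (S9.Fq p) q := fun q hq =>
    (hFsm q hq).differentiableAt (by decide)
  have hGdiff : ∀ q ∈ Ω, DifferentiableAt ℝ (S9.Gq p) q := fun q hq =>
    (hGsm q hq).differentiableAt (by decide)
  have hAsm : ∀ l, ∀ q ∈ Ω, ContDiffAt ℝ ∞ (S9.Aq p l) q := fun l q hq =>
    S9.pd_contDiffAt (hGsm q hq) (S9.ee l)
  have hAdiff : ∀ l, ∀ q ∈ Ω, DifferentiableAt ℝ (S9.Aq p l) q := fun l q hq =>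
    (hAsm l q hq).differentiableAt (by decide)
  have hAFdiff : ∀ l, ∀ q ∈ Ω, DifferentiableAt ℝ (S9.AFq p l) q := fun l q hq =>
    (S9.pd_contDiffAt (hFsm q hq) (S9.ee l)).differentiableAt (by decide)
  have hpdAdiff : ∀ a b, ∀ q ∈ Ω, DifferentiableAt ℝ (S9.pdAq p a b) q := fun a b q hq =>
    (S9.pd_contDiffAt (hAsm b q hq) (S9.ee a)).differentiableAt (by decide)
  have hmem : ∀ (τ : ℝ), τ ∈ Set.Ioo (0:ℝ) T → ∀ z : EuclideanSpace ℝ (Fin d), (τ, z) ∈ Ω :=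
    fun τ hτ z => ⟨hτ, trivial⟩
  -- the score in terms of the atoms
  have hscore : ∀ τ ∈ Set.Ioo (0:ℝ) T, ∀ (z : EuclideanSpace ℝ (Fin d)) (i : Fin d),
      s τ z i = ∑ j, C i j * S9.Aq p j (τ, z) := by
    intro τ hτ z i
    rw [hs, S9.toEuc_apply]
    refine Finset.sum_congr rfl fun j _ => ?_
    congr 1
    rw [S9.grad_apply]
    exact S9.fderiv_slice (f := S9.Gq p) (hGdiff _ (hmem τ hτ z)) _
  -- chain rule for log
  have r1v : ∀ q ∈ Ω, ∀ v, fderiv ℝ (S9.Fq p) q v = S9.Fq p q * fderiv ℝ (S9.Gq p) q v := by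
    intro q hq v
    have hexp : HasFDerivAt (fun q' => Real.exp (S9.Gq p q'))
        (Real.exp (S9.Gq p q) • fderiv ℝ (S9.Gq p) q) q :=
      (Real.hasDerivAt_exp _).comp_hasFDerivAt q (hGdiff q hq).hasFDerivAt
    have heq : (fun q' => Real.exp (S9.Gq p q')) =ᶠ[nhds q] S9.Fq p := by
      filter_upwards [hΩ.mem_nhds hq] with q' hq'
      exact Real.exp_log (hFpos q' hq')
    have h2 : fderiv ℝ (S9.Fq p) q = Real.exp (S9.Gq p q) • fderiv ℝ (S9.Gq p) q := by
      rw [heq.symm.fderiv_eq, hexp.fderiv]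
    rw [h2, ContinuousLinearMap.smul_apply, smul_eq_mul]
    congr 1
    exact Real.exp_log (hFpos q hq)
  -- second derivative conversion
  have r2 : ∀ q ∈ Ω, ∀ a b, fderiv ℝ (S9.AFq p b) q (S9.ee a)
      = S9.Fq p q * (S9.pdAq p a b q + S9.Aq p a q * S9.Aq p b q) := by
    intro q hq a b
    have heq : S9.AFq p b =ᶠ[nhds q] fun q' => S9.Fq p q' * S9.Aq p b q' := by
      filter_upwards [hΩ.mem_nhds hq] with q' hq'
      exact r1v q' hq' (S9.ee b)
    rw [heq.fderiv_eq, fderiv_fun_mul (hFdiff q hq) (hAdiff b q hq),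
      ContinuousLinearMap.add_apply, ContinuousLinearMap.smul_apply,
      ContinuousLinearMap.smul_apply, smul_eq_mul, smul_eq_mul, r1v q hq (S9.ee a)]
    have hpd : fderiv ℝ (S9.Aq p b) q (S9.ee a) = S9.pdAq p a b q := rfl
    have hA2 : fderiv ℝ (S9.Gq p) q (S9.ee a) = S9.Aq p a q := rfl
    rw [hpd, hA2]
    ring
  -- the Fokker-Planck equation in terms of the atoms
  have hdagger : ∀ q ∈ Ω, S9.Atq p q = (1/2) * ((d:ℝ) + ∑ i, q.2 i * S9.Aq p i q
      + ∑ a, ∑ b, C a b * (S9.Aq p a q * S9.Aq p b q + S9.pdAq p a b q)) := by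
    rintro ⟨τ, y⟩ hq
    dsimp only
    have hτ : τ ∈ Set.Ioo (0:ℝ) T := hq.1
    have hlhs : deriv (fun τ' => p τ' y) τ = fderiv ℝ (S9.Fq p) (τ, y) S9.ett :=
      (S9.hasDerivAt_slice (f := S9.Fq p) (hFdiff _ hq)).deriv
    have hdiv1 : diverg (fun z => p τ z • z) y
        = ∑ i, (S9.Fq p (τ, y) + y i * fderiv ℝ (S9.Fq p) (τ, y) (S9.ee i)) := by
      have hv : ∀ (z : EuclideanSpace ℝ (Fin d)) i,
          (p τ z • z : EuclideanSpace ℝ (Fin d)) i = S9.Fq p (τ, z) * z i := fun z i => rfl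
      have hg : ∀ i : Fin d, HasFDerivAt (fun z => S9.Fq p (τ, z) * z i)
          (S9.Fq p (τ, y) • (EuclideanSpace.proj i)
            + y i • ((fderiv ℝ (S9.Fq p) (τ, y)).comp
              ((0 : EuclideanSpace ℝ (Fin d) →L[ℝ] ℝ).prod
                (ContinuousLinearMap.id ℝ (EuclideanSpace ℝ (Fin d)))))) y := by
        intro i
        have h1 : HasFDerivAt (fun z : EuclideanSpace ℝ (Fin d) => S9.Fq p (τ, z))
            ((fderiv ℝ (S9.Fq p) (τ, y)).comp
              ((0 : EuclideanSpace ℝ (Fin d) →L[ℝ] ℝ).prod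
                (ContinuousLinearMap.id ℝ (EuclideanSpace ℝ (Fin d))))) y :=
          S9.hasFDerivAt_slice (hFdiff _ (hmem τ hτ y))
        have h2 : HasFDerivAt (fun z : EuclideanSpace ℝ (Fin d) => z i)
            (EuclideanSpace.proj (𝕜 := ℝ) i) y := by
          exact (EuclideanSpace.proj (𝕜 := ℝ) i).hasFDerivAt
        exact h1.mul h2
      rw [S9.diverg_eq hv hg]
      refine Finset.sum_congr rfl fun i _ => ?_
      simp only [ContinuousLinearMap.add_apply, ContinuousLinearMap.smul_apply, smul_eq_mul,
        ContinuousLinearMap.comp_apply, ContinuousLinearMap.prod_apply,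
        ContinuousLinearMap.zero_apply, ContinuousLinearMap.id_apply, PiLp.proj_apply,
        EuclideanSpace.single_apply, eq_self_iff_true, if_true, mul_one, S9.ee]
    have hdiv2 : diverg (fun z => Matrix.toEuclideanLin C (gradient (fun w => p τ w) z)) y
        = ∑ a, ∑ b, C a b * fderiv ℝ (S9.AFq p b) (τ, y) (S9.ee a) := by
      have hv : ∀ (z : EuclideanSpace ℝ (Fin d)) i,
          (Matrix.toEuclideanLin C (gradient (fun w => p τ w) z)) i
            = ∑ j, C i j * S9.AFq p j (τ, z) := by
        intro z i
        rw [S9.toEuc_apply]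
        refine Finset.sum_congr rfl fun j _ => ?_
        congr 1
        rw [S9.grad_apply]
        exact S9.fderiv_slice (f := S9.Fq p) (hFdiff _ (hmem τ hτ z)) _
      have hg : ∀ i : Fin d, HasFDerivAt (fun z => ∑ j, C i j * S9.AFq p j (τ, z))
          (∑ j, C i j • ((fderiv ℝ (S9.AFq p j) (τ, y)).comp
            ((0 : EuclideanSpace ℝ (Fin d) →L[ℝ] ℝ).prod
              (ContinuousLinearMap.id ℝ (EuclideanSpace ℝ (Fin d)))))) y := by
        intro i
        refine HasFDerivAt.fun_sum fun j _ => ?_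
        exact (S9.hasFDerivAt_slice (hAFdiff j _ hq)).const_mul (C i j)
      rw [S9.diverg_eq hv hg]
      refine Finset.sum_congr rfl fun a _ => ?_
      rw [ContinuousLinearMap.sum_apply]
      refine Finset.sum_congr rfl fun b _ => ?_
      simp only [ContinuousLinearMap.smul_apply, smul_eq_mul, ContinuousLinearMap.comp_apply,
        ContinuousLinearMap.prod_apply, ContinuousLinearMap.zero_apply,
        ContinuousLinearMap.id_apply, S9.ee]
    have hFP' := hFP τ hτ y
    rw [hlhs, hdiv1, hdiv2] at hFP'
    rw [r1v _ hq S9.ett] at hFP'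
    simp only [fun i => r1v (τ, y) hq (S9.ee i), fun a b => r2 (τ, y) hq a b] at hFP'
    have hAeq : ∀ i, fderiv ℝ (S9.Gq p) (τ, y) (S9.ee i) = S9.Aq p i (τ, y) := fun _ => rfl
    simp only [hAeq] at hFP'
    refine mul_left_cancel₀ (hFpos _ hq).ne' ?_
    have hAt : S9.Atq p (τ, y) = fderiv ℝ (S9.Gq p) (τ, y) S9.ett := rfl
    rw [hAt, hFP']
    have s1 : ∑ i : Fin d, (S9.Fq p (τ, y) + y i * (S9.Fq p (τ, y) * S9.Aq p i (τ, y)))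
        = (d:ℝ) * S9.Fq p (τ, y) + S9.Fq p (τ, y) * ∑ i, y i * S9.Aq p i (τ, y) := by
      rw [Finset.sum_add_distrib, Finset.sum_const, Finset.mul_sum]
      simp only [Finset.card_univ, Fintype.card_fin, nsmul_eq_mul]
      congr 1
      exact Finset.sum_congr rfl fun i _ => by ring
    have s2 : ∑ a, ∑ b, C a b * (S9.Fq p (τ, y) * (S9.pdAq p a b (τ, y)
          + S9.Aq p a (τ, y) * S9.Aq p b (τ, y)))
        = S9.Fq p (τ, y) * ∑ a, ∑ b, C a b * (S9.Aq p a (τ, y) * S9.Aq p b (τ, y)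
          + S9.pdAq p a b (τ, y)) := by
      rw [Finset.mul_sum]
      refine Finset.sum_congr rfl fun a _ => ?_
      rw [Finset.mul_sum]
      exact Finset.sum_congr rfl fun b _ => by ring
    rw [s1, s2]
    ring
  -- symmetry of second derivatives
  have hDsym : ∀ a b, fderiv ℝ (S9.Aq p b) (t, x) (S9.ee a)
      = fderiv ℝ (S9.Aq p a) (t, x) (S9.ee b) := fun a b =>
    S9.pd_swap (hGsm _ hq0) (S9.ee b) (S9.ee a)
  have hCs : ∀ a b, C a b = C b a := by
    intro a b
    have h := hC.1
    conv_lhs => rw [← h]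
    simp [Matrix.conjTranspose_apply]
  -- the key pointwise identity (differentiated Fokker-Planck)
  have hkey : ∀ k, fderiv ℝ (S9.Aq p k) (t, x) S9.ett
      = (1/2) * (S9.Aq p k (t, x) + ∑ m, x m * fderiv ℝ (S9.Aq p m) (t, x) (S9.ee k)
        + ∑ a, ∑ b, C a b * (S9.Aq p a (t, x) * fderiv ℝ (S9.Aq p b) (t, x) (S9.ee k)
          + S9.Aq p b (t, x) * fderiv ℝ (S9.Aq p a) (t, x) (S9.ee k)
          + fderiv ℝ (S9.pdAq p a b) (t, x) (S9.ee k))) := by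
    intro k
    have hswap : fderiv ℝ (S9.Aq p k) (t, x) S9.ett = fderiv ℝ (S9.Atq p) (t, x) (S9.ee k) :=
      S9.pd_swap (hGsm _ hq0) (S9.ee k) S9.ett
    have hAteq : S9.Atq p =ᶠ[nhds (t, x)] fun q => (1/2) * ((d:ℝ) + ∑ i, q.2 i * S9.Aq p i q
        + ∑ a, ∑ b, C a b * (S9.Aq p a q * S9.Aq p b q + S9.pdAq p a b q)) :=
      Filter.eventuallyEq_of_mem (hΩ.mem_nhds hq0) hdagger
    rw [hswap, hAteq.fderiv_eq]
    have hR : HasFDerivAt (fun q : ℝ × EuclideanSpace ℝ (Fin d) => (1/2) * ((d:ℝ)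
          + ∑ i, q.2 i * S9.Aq p i q
          + ∑ a, ∑ b, C a b * (S9.Aq p a q * S9.Aq p b q + S9.pdAq p a b q)))
        ((1/2 : ℝ) • (((0 : (ℝ × EuclideanSpace ℝ (Fin d)) →L[ℝ] ℝ)
          + ∑ i, (x i • fderiv ℝ (S9.Aq p i) (t, x)
            + S9.Aq p i (t, x) • ((EuclideanSpace.proj i).comp
                (ContinuousLinearMap.snd ℝ ℝ (EuclideanSpace ℝ (Fin d))))))
          + ∑ a, ∑ b, C a b • ((S9.Aq p a (t, x) • fderiv ℝ (S9.Aq p b) (t, x)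
            + S9.Aq p b (t, x) • fderiv ℝ (S9.Aq p a) (t, x))
            + fderiv ℝ (S9.pdAq p a b) (t, x)))) (t, x) := by
      refine HasFDerivAt.const_mul ?_ (1/2 : ℝ)
      refine ((hasFDerivAt_const (d:ℝ) ((t, x) : ℝ × EuclideanSpace ℝ (Fin d))).add ?_).add ?_
      · refine HasFDerivAt.fun_sum fun i _ => ?_
        have hcoord : HasFDerivAt (fun q : ℝ × EuclideanSpace ℝ (Fin d) => q.2 i)
            ((EuclideanSpace.proj (𝕜 := ℝ) i).comp
              (ContinuousLinearMap.snd ℝ ℝ (EuclideanSpace ℝ (Fin d)))) (t, x) := by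
          exact ((EuclideanSpace.proj (𝕜 := ℝ) i).comp
            (ContinuousLinearMap.snd ℝ ℝ (EuclideanSpace ℝ (Fin d)))).hasFDerivAt
        exact hcoord.mul (hAdiff i _ hq0).hasFDerivAt
      · refine HasFDerivAt.fun_sum fun a _ => HasFDerivAt.fun_sum fun b _ => ?_
        exact (((hAdiff a _ hq0).hasFDerivAt.mul (hAdiff b _ hq0).hasFDerivAt).add
          (hpdAdiff a b _ hq0).hasFDerivAt).const_mul (C a b)
    rw [hR.fderiv]
    simp only [ContinuousLinearMap.smul_apply, ContinuousLinearMap.add_apply,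
      ContinuousLinearMap.zero_apply, ContinuousLinearMap.sum_apply,
      ContinuousLinearMap.comp_apply, ContinuousLinearMap.coe_snd', PiLp.proj_apply,
      smul_eq_mul, S9.ee, EuclideanSpace.single_apply]
    rw [Finset.sum_add_distrib]
    simp only [mul_ite, mul_one, mul_zero, Finset.sum_ite_eq, Finset.sum_ite_eq',
      Finset.mem_univ, if_true]
    ring
  -- the score at (t, x)
  have hsx : ∀ m, s t x m = ∑ b, C m b * S9.Aq p b (t, x) := fun m => hscore t ht x m
  have hvst : ∀ (z : EuclideanSpace ℝ (Fin d)) i, s t z i = ∑ j, C i j * S9.Aq p j (t, z) :=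
    fun z i => hscore t ht z i
  -- Jacobian of the score applied to a vector
  have hg0 : ∀ i, HasFDerivAt (fun z => ∑ j, C i j * S9.Aq p j (t, z))
      (∑ j, C i j • ((fderiv ℝ (S9.Aq p j) (t, x)).comp
        ((0 : EuclideanSpace ℝ (Fin d) →L[ℝ] ℝ).prod
          (ContinuousLinearMap.id ℝ (EuclideanSpace ℝ (Fin d)))))) x := fun i =>
    HasFDerivAt.fun_sum fun j _ => (S9.hasFDerivAt_slice (hAdiff j _ hq0)).const_mul (C i j)
  have hfsv : ∀ (w : EuclideanSpace ℝ (Fin d)) i, fderiv ℝ (s t) x w i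
      = ∑ j, C i j * ∑ m, w m * fderiv ℝ (S9.Aq p j) (t, x) (S9.ee m) := by
    intro w i
    rw [S9.fderiv_vec_apply hvst hg0 w i, ContinuousLinearMap.sum_apply]
    refine Finset.sum_congr rfl fun j _ => ?_
    rw [ContinuousLinearMap.smul_apply, smul_eq_mul]
    congr 1
    rw [ContinuousLinearMap.comp_apply]
    have hw : (((0 : EuclideanSpace ℝ (Fin d) →L[ℝ] ℝ).prod
        (ContinuousLinearMap.id ℝ (EuclideanSpace ℝ (Fin d)))) w) = ((0:ℝ), w) := by simp
    rw [hw, S9.decomp_pair]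
    exact Finset.sum_congr rfl fun m _ => rfl
  -- divergence of the score
  have hdivs : ∀ z : EuclideanSpace ℝ (Fin d), diverg (s t) z
      = ∑ a, ∑ b, C a b * S9.pdAq p a b (t, z) := by
    intro z
    have hgz : ∀ i, HasFDerivAt (fun z' => ∑ j, C i j * S9.Aq p j (t, z'))
        (∑ j, C i j • ((fderiv ℝ (S9.Aq p j) (t, z)).comp
          ((0 : EuclideanSpace ℝ (Fin d) →L[ℝ] ℝ).prod
            (ContinuousLinearMap.id ℝ (EuclideanSpace ℝ (Fin d)))))) z := fun i =>
      HasFDerivAt.fun_sum fun j _ =>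
        (S9.hasFDerivAt_slice (hAdiff j _ (hmem t ht z))).const_mul (C i j)
    rw [S9.diverg_eq hvst hgz]
    refine Finset.sum_congr rfl fun a _ => ?_
    rw [ContinuousLinearMap.sum_apply]
    refine Finset.sum_congr rfl fun b _ => ?_
    simp only [ContinuousLinearMap.smul_apply, smul_eq_mul, ContinuousLinearMap.comp_apply,
      ContinuousLinearMap.prod_apply, ContinuousLinearMap.zero_apply,
      ContinuousLinearMap.id_apply]
    rfl
  -- gradient of the divergence of the score
  have hgradk : ∀ k, gradient (fun z => diverg (s t) z) x k
      = ∑ a, ∑ b, C a b * fderiv ℝ (S9.pdAq p a b) (t, x) (S9.ee k) := by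
    intro k
    rw [S9.grad_apply]
    have heq2 : (fun z => diverg (s t) z) = fun z => ∑ a, ∑ b, C a b * S9.pdAq p a b (t, z) :=
      funext hdivs
    rw [heq2]
    have hgd : HasFDerivAt (fun z => ∑ a, ∑ b, C a b * S9.pdAq p a b (t, z))
        (∑ a, ∑ b, C a b • ((fderiv ℝ (S9.pdAq p a b) (t, x)).comp
          ((0 : EuclideanSpace ℝ (Fin d) →L[ℝ] ℝ).prod
            (ContinuousLinearMap.id ℝ (EuclideanSpace ℝ (Fin d)))))) x :=
      HasFDerivAt.fun_sum fun a _ => HasFDerivAt.fun_sum fun b _ =>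
        (S9.hasFDerivAt_slice (hpdAdiff a b _ hq0)).const_mul (C a b)
    rw [hgd.fderiv, ContinuousLinearMap.sum_apply]
    refine Finset.sum_congr rfl fun a _ => ?_
    rw [ContinuousLinearMap.sum_apply]
    refine Finset.sum_congr rfl fun b _ => ?_
    simp only [ContinuousLinearMap.smul_apply, smul_eq_mul, ContinuousLinearMap.comp_apply,
      ContinuousLinearMap.prod_apply, ContinuousLinearMap.zero_apply,
      ContinuousLinearMap.id_apply]
    rfl
  -- componentwise conclusion
  ext i
  have hLHS : deriv (fun τ => s τ x) t i = ∑ j, C i j * fderiv ℝ (S9.Aq p j) (t, x) S9.ett := by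
    refine S9.deriv_vec ?_ (fun i' => HasDerivAt.fun_sum fun j _ =>
      ((S9.hasDerivAt_slice (hAdiff j _ hq0)).const_mul (C i' j))) i
    filter_upwards [isOpen_Ioo.mem_nhds ht] with τ hτ
    intro i'
    exact hscore τ hτ x i'
  rw [hLHS]
  simp only [PiLp.smul_apply, PiLp.add_apply, smul_eq_mul]
  rw [S9.toEuc_apply, hfsv (s t x) i, hfsv x i, hsx i]
  simp only [hgradk, hsx, hkey]
  exact S9.algebra_key C hCs (fun j => S9.Aq p j (t, x)) (fun m => x m)
    (fun a b => fderiv ℝ (S9.Aq p b) (t, x) (S9.ee a)) hDsym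
    (fun k a b => fderiv ℝ (S9.pdAq p a b) (t, x) (S9.ee k)) i
end
end
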